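/- For γ ∈ ℝ, Re(s) > 1 and x ∈ ℝ∖{0}, the convolution of the kernel Q̂_s(y) = (1/2)|y|^s(Θ(iy²) − 1), where Θ(τ) = ∑_{n∈ℤ} e^{iπτn²}, against ψ_γ(x) = |x|^{iγ} over the multiplicative group ℝ* equals ζ̂(s − iγ) · ψ_γ(x), where ζ̂(s) = π^{-s/2} Γ(s/2) ζ(s) is the completed Riemann zeta function. -/

import Mathlib

/-!
For `y ≠ 0` the integrand factors as `|x| ^ (iγ) * |y| ^ (w - 1) * (θ(y²) - 1) / 2` with
`w = s - iγ`, because `|·| ^ (iγ)` is a character of `ℝˣ`. It is even in `y`, so the integral is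
`2 |x| ^ (iγ)` times the Mellin transform at `w` of `u ↦ (θ(u²) - 1) / 2`. The substitution
`t = u²` turns this into a quarter of the Mellin transform at `w / 2` of `θ - 1`, where
`θ(t) = ∑ₙ exp (-π n² t)` is Mathlib's `evenKernel 0`. For `1 < re w` that transform is `2 Λ(w)`
by the construction of `completedRiemannZeta`, and `Λ(w) = π ^ (-w / 2) Γ(w / 2) ζ(w)`.
-/

open MeasureTheory Complex Real Set HurwitzZeta

theorem integral_comp_abs_eq_two_smul {E : Type*} [NormedAddCommGroup E] [NormedSpace ℝ E]
    (f : ℝ → E) : ∫ x, f |x| = (2 : ℝ) • ∫ x in Ioi 0, f x := by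
  have h_pos : ∫ x in Ioi 0, f |x| = ∫ x in Ioi 0, f x :=
    setIntegral_congr_fun measurableSet_Ioi fun x hx ↦ by rw [abs_of_pos hx]
  have h_neg : ∫ x in Iic 0, f |x| = ∫ x in Ioi 0, f x := by
    rw [← neg_zero, ← integral_comp_neg_Ioi, neg_zero]
    simpa only [abs_neg] using h_pos
  by_cases hf : IntegrableOn (fun x ↦ f |x|) (Ioi 0)
  · have hf' : IntegrableOn (fun x ↦ f |x|) (Iic 0) := by
      rw [integrableOn_Iic_iff_integrableOn_Iio]
      simpa only [abs_neg, neg_Ioi, neg_zero] using hf.comp_neg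
    rw [← setIntegral_univ, ← Iic_union_Ioi (a := (0 : ℝ)),
      setIntegral_union (Iic_disjoint_Ioi le_rfl) measurableSet_Ioi hf' hf, h_neg, h_pos, two_smul]
  · have : ¬ Integrable fun x ↦ f |x| := fun h ↦ hf h.integrableOn
    rw [integral_undef this, ← h_pos, integral_undef hf, smul_zero]

theorem mellin_comp_sq {E : Type*} [NormedAddCommGroup E] [NormedSpace ℂ E] (f : ℝ → E) (s : ℂ) :
    mellin (fun t ↦ f (t ^ 2)) s = (2 : ℝ)⁻¹ • mellin f (s / 2) := by
  simpa [Real.rpow_two] using mellin_comp_rpow f s 2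

theorem abs_cpow_mul_abs_div_cpow {x y : ℝ} (hy : y ≠ 0) (s z : ℂ) :
    ((|y| : ℝ) : ℂ) ^ s * ((|x / y| : ℝ) : ℂ) ^ z / ((|y| : ℝ) : ℂ) =
      ((|x| : ℝ) : ℂ) ^ z * ((|y| : ℝ) : ℂ) ^ (s - z - 1) := by
  have hy' : ((|y| : ℝ) : ℂ) ≠ 0 := ofReal_ne_zero.mpr (abs_ne_zero.mpr hy)
  rw [abs_div, ofReal_div, div_cpow_ofReal_nonneg (abs_nonneg _) (abs_nonneg _), cpow_sub _ _ hy',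
    cpow_sub _ _ hy', cpow_one]
  ring

theorem tsum_exp_neg_pi_mul_sq_eq_evenKernel_zero {t : ℝ} (ht : 0 < t) :
    ∑' n : ℤ, rexp (-π * t * n ^ 2) = evenKernel 0 t := by
  refine (hasSum_int_evenKernel 0 ht).tsum_eq ▸ tsum_congr fun n ↦ ?_
  ring_nf

theorem mellin_evenKernel_zero_sub_one {s : ℂ} (hs : 1 < s.re) :
    mellin (fun t ↦ (evenKernel 0 t : ℂ) - 1) (s / 2) = 2 * completedRiemannZeta s := by
  have hk : (hurwitzEvenFEPair 0).k < (s / 2).re := by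
    simp only [hurwitzEvenFEPair, div_ofNat_re]
    linarith
  rw [completedRiemannZeta, completedHurwitzZetaEven, ← ((hurwitzEvenFEPair 0).hasMellin hk).2,
    mul_div_cancel₀ _ two_ne_zero]
  simp [hurwitzEvenFEPair]

theorem mellin_evenKernel_zero_sq_sub_one_div_two {s : ℂ} (hs : 1 < s.re) :
    mellin (fun u ↦ ((evenKernel 0 (u ^ 2) : ℂ) - 1) / 2) s = completedRiemannZeta s / 2 := by
  rw [mellin_comp_sq (fun t ↦ ((evenKernel 0 t : ℂ) - 1) / 2), mellin_div_const,
    mellin_evenKernel_zero_sub_one hs, real_smul]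
  push_cast
  ring

theorem completedRiemannZeta_eq_Gammaℝ_mul_riemannZeta {s : ℂ} (hs : 0 < s.re) :
    completedRiemannZeta s = Gammaℝ s * riemannZeta s := by
  rw [riemannZeta_def_of_ne_zero (ne_zero_of_re_pos hs),
    mul_div_cancel₀ _ (Gammaℝ_ne_zero_of_re_pos hs)]

theorem stmt_3_general (s : ℂ) (hs : 1 < s.re) (γ : ℝ) (x : ℝ) :
    ∫ y : ℝ, (1 / 2 : ℂ) * ((|y| : ℝ) : ℂ) ^ s *
        ((((∑' n : ℤ, Real.exp (-Real.pi * y ^ 2 * (n : ℝ) ^ 2)) - 1 : ℝ)) : ℂ) *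
        ((|x / y| : ℝ) : ℂ) ^ (Complex.I * γ) / ((|y| : ℝ) : ℂ) =
      (Real.pi : ℂ) ^ (-(s - Complex.I * γ) / 2) * Complex.Gamma ((s - Complex.I * γ) / 2) *
        riemannZeta (s - Complex.I * γ) * ((|x| : ℝ) : ℂ) ^ (Complex.I * γ) := by
  set w := s - I * γ
  have hw : 1 < w.re := by simpa [w] using hs
  set k : ℝ → ℂ := fun u ↦ ((evenKernel 0 (u ^ 2) : ℂ) - 1) / 2
  calc _ = ∫ y : ℝ, ((|x| : ℝ) : ℂ) ^ (I * γ) * (((|y| : ℝ) : ℂ) ^ (w - 1) • k |y|) := by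
        refine integral_congr_ae ((Measure.ae_ne volume 0).mono fun y hy ↦ ?_)
        have hθ := tsum_exp_neg_pi_mul_sq_eq_evenKernel_zero (t := y ^ 2) (by positivity)
        beta_reduce
        rw [hθ, show ∀ a b c d e : ℂ, a * b * c * d / e = a * c * (b * d / e) by intros; ring,
          abs_cpow_mul_abs_div_cpow hy]
        simp only [k, smul_eq_mul, sq_abs, ofReal_sub, ofReal_one]
        ring
    _ = ((|x| : ℝ) : ℂ) ^ (I * γ) * (2 * mellin k w) := by
        rw [integral_const_mul, integral_comp_abs_eq_two_smul (fun u : ℝ ↦ (u : ℂ) ^ (w - 1) • k u),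
          mellin, two_smul, two_mul]
    _ = _ := by
        rw [mellin_evenKernel_zero_sq_sub_one_div_two hw,
          completedRiemannZeta_eq_Gammaℝ_mul_riemannZeta (by linarith), Gammaℝ_def]
        ring

/-- Convolution of the global GL₁ Hecke-Baxter kernel (1/2)|y|^s(Θ(iy²)−1) against
ψ_γ(x)=|x|^{iγ} equals the completed zeta value ζ̂(s−iγ) times ψ_γ(x). -/
theorem stmt_3 (s : ℂ) (hs : 1 < s.re) (γ : ℝ) (x : ℝ) (hx : x ≠ 0) :
    ∫ y : ℝ, (1 / 2 : ℂ) * ((|y| : ℝ) : ℂ) ^ s *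
        ((((∑' n : ℤ, Real.exp (-Real.pi * y ^ 2 * (n : ℝ) ^ 2)) - 1 : ℝ)) : ℂ) *
        ((|x / y| : ℝ) : ℂ) ^ (Complex.I * γ) / ((|y| : ℝ) : ℂ) =
      (Real.pi : ℂ) ^ (-(s - Complex.I * γ) / 2) * Complex.Gamma ((s - Complex.I * γ) / 2) *
        riemannZeta (s - Complex.I * γ) * ((|x| : ℝ) : ℂ) ^ (Complex.I * γ) :=
  stmt_3_general s hs γ x
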